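/- arXiv:math/0411290 — 6 statements merged into one kernel-verified Lean document; each statement's English description precedes it below -/
import Mathlib

section
/- Let g₀ ≤ g₁ be natural numbers, let k ≥ 1 and l be natural numbers, let m : Fin k → ℕ with m i ≥ 2 for all i, and let n : Fin l → ℕ with n j ≥ 2 for all j. Set h = 2·((g₀ : ℤ) − g₁). If (l : ℤ) ≥ 2·(k + h), then in ℝ one has 2 − 2g₀ − k + ∑_i 1/(m i) ≠ 2 − 2g₁ − l + ∑_j 1/(n j). -/
/-!
Write `χ(g; q) = 2 - 2g - s + ∑ 1/q_j`. Every cone point contributes a term in `(0, 1/2]`, so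
`2 - 2g - s < χ(g; q) ≤ 2 - 2g - s/2` as soon as there is at least one cone point. The hypothesis
on `l` says exactly that the upper bound for `O'` is at most the strict lower bound for `O`.
-/

noncomputable def orbifoldEulerChar {s : ℕ} (g : ℕ) (q : Fin s → ℕ) : ℝ :=
  2 - 2 * g - s + ∑ j, 1 / (q j : ℝ)

theorem orbifoldEulerChar_le_of_two_le {s : ℕ} (g : ℕ) (q : Fin s → ℕ) (hq : ∀ j, 2 ≤ q j) :
    orbifoldEulerChar g q ≤ 2 - 2 * g - s / 2 := by
  have hsum : ∑ j, 1 / (q j : ℝ) ≤ s * (1 / 2) := by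
    simpa using Finset.sum_le_card_nsmul Finset.univ (fun j ↦ 1 / (q j : ℝ)) (1 / 2)
      fun j _ ↦ one_div_le_one_div_of_le two_pos (by exact_mod_cast hq j)
  unfold orbifoldEulerChar
  linarith

theorem lt_orbifoldEulerChar {s : ℕ} (hs : 0 < s) (g : ℕ) (q : Fin s → ℕ) (hq : ∀ j, 0 < q j) :
    2 - 2 * g - s < orbifoldEulerChar g q := by
  have : Nonempty (Fin s) := Fin.pos_iff_nonempty.mp hs
  have hsum : 0 < ∑ j, 1 / (q j : ℝ) :=
    Finset.sum_pos (fun j _ ↦ one_div_pos.mpr (by exact_mod_cast hq j)) Finset.univ_nonempty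
  unfold orbifoldEulerChar
  linarith

theorem stmt_1_general (g₀ g₁ : ℕ) (k l : ℕ) (hk : 1 ≤ k)
    (m : Fin k → ℕ) (hm : ∀ i, 2 ≤ m i)
    (n : Fin l → ℕ) (hn : ∀ j, 2 ≤ n j)
    (h : ℤ) (hh : h = 2 * ((g₀ : ℤ) - (g₁ : ℤ)))
    (hl : (l : ℤ) ≥ 2 * ((k : ℤ) + h)) :
    (2 : ℝ) - 2 * g₀ - k + ∑ i, 1 / (m i : ℝ) ≠
      (2 : ℝ) - 2 * g₁ - l + ∑ j, 1 / (n j : ℝ) := by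
  change orbifoldEulerChar g₀ m ≠ orbifoldEulerChar g₁ n
  have hl' : (l : ℝ) ≥ 2 * ((k : ℝ) + 2 * ((g₀ : ℝ) - g₁)) := by
    subst hh
    exact_mod_cast hl
  refine ne_of_gt ?_
  calc orbifoldEulerChar g₁ n ≤ 2 - 2 * g₁ - l / 2 := orbifoldEulerChar_le_of_two_le g₁ n hn
    _ ≤ 2 - 2 * g₀ - k := by linarith
    _ < orbifoldEulerChar g₀ m := lt_orbifoldEulerChar hk g₀ m fun i ↦ two_pos.trans_le (hm i)

theorem stmt_1 (g₀ g₁ : ℕ) (hg : g₀ ≤ g₁) (k l : ℕ) (hk : 1 ≤ k)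
    (m : Fin k → ℕ) (hm : ∀ i, 2 ≤ m i)
    (n : Fin l → ℕ) (hn : ∀ j, 2 ≤ n j)
    (h : ℤ) (hh : h = 2 * ((g₀ : ℤ) - (g₁ : ℤ)))
    (hl : (l : ℤ) ≥ 2 * ((k : ℤ) + h)) :
    (2 : ℝ) - 2 * g₀ - k + ∑ i, 1 / (m i : ℝ) ≠
      (2 : ℝ) - 2 * g₁ - l + ∑ j, 1 / (n j : ℝ) :=
  stmt_1_general g₀ g₁ k l hk m hm n hn h hh hl
end

section
/- Let ℓ : ℕ → ℝ be strictly monotone increasing with ℓ 0 > 0, and let c : ℕ → ℝ with c k > 0 for all k. Assume that for every t > 0 the family k ↦ c k · exp(−(ℓ k)² / (4t)) is summable. Then the function t ↦ exp((ℓ 0)² / (4t)) · ∑'_k c k · exp(−(ℓ k)² / (4t)) tends to c 0 as t → 0 from the right (i.e. Tendsto along 𝓝[>] 0 to 𝓝 (c 0)). -/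
open Filter

theorem stmt_5 (ℓ c : ℕ → ℝ) (hℓ : StrictMono ℓ) (hℓ0 : 0 < ℓ 0)
    (hc : ∀ k, 0 < c k)
    (hsum : ∀ t > (0 : ℝ), Summable fun k => c k * Real.exp (-(ℓ k) ^ 2 / (4 * t))) :
    Tendsto (fun t : ℝ => Real.exp ((ℓ 0) ^ 2 / (4 * t)) *
        ∑' k, c k * Real.exp (-(ℓ k) ^ 2 / (4 * t)))
      (nhdsWithin 0 (Set.Ioi 0)) (nhds (c 0)) := by
  have hℓpos : ∀ k, 0 < ℓ k := fun k => lt_of_lt_of_le hℓ0 (hℓ.monotone (Nat.zero_le k))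
  set δ := ℓ 1 ^ 2 - ℓ 0 ^ 2 with hδdef
  have hδ : 0 < δ := by
    have h01 := hℓ (show 0 < 1 by norm_num)
    nlinarith [hℓpos 1]
  have hdδ : ∀ k, δ ≤ ℓ (k + 1) ^ 2 - ℓ 0 ^ 2 := by
    intro k
    have h1 : ℓ 1 ≤ ℓ (k + 1) := hℓ.monotone (Nat.succ_le_succ (Nat.zero_le k))
    have := pow_le_pow_left₀ (hℓpos 1).le h1 2
    linarith
  -- shifted, rescaled family is summable
  have hsum2 : ∀ t > (0 : ℝ), Summable fun k =>
      c (k + 1) * Real.exp (-(ℓ (k + 1) ^ 2 - ℓ 0 ^ 2) / (4 * t)) := by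
    intro t ht
    have h := ((hsum t ht).comp_injective (add_left_injective 1)).mul_left
        (Real.exp (ℓ 0 ^ 2 / (4 * t)))
    refine h.congr fun k => ?_
    show Real.exp (ℓ 0 ^ 2 / (4 * t)) * (c (k + 1) * Real.exp (-ℓ (k + 1) ^ 2 / (4 * t))) = _
    rw [← mul_assoc, mul_comm (Real.exp _) (c (k + 1)), mul_assoc, ← Real.exp_add,
      ← add_div]
    congr 2
    ring
  -- the tail function
  set T : ℝ → ℝ := fun t => ∑' k, c (k + 1) * Real.exp (-(ℓ (k + 1) ^ 2 - ℓ 0 ^ 2) / (4 * t))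
    with hT_def
  -- main rewrite on (0,∞)
  have key : ∀ t > (0 : ℝ),
      Real.exp ((ℓ 0) ^ 2 / (4 * t)) * ∑' k, c k * Real.exp (-(ℓ k) ^ 2 / (4 * t))
        = c 0 + T t := by
    intro t ht
    have hs : Summable fun k => c k * Real.exp (-(ℓ k ^ 2 - ℓ 0 ^ 2) / (4 * t)) := by
      refine ((hsum t ht).mul_left (Real.exp (ℓ 0 ^ 2 / (4 * t)))).congr fun k => ?_
      rw [← mul_assoc, mul_comm (Real.exp _) (c k), mul_assoc, ← Real.exp_add,
        ← add_div]
      congr 2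
      ring
    have h1 : Real.exp ((ℓ 0) ^ 2 / (4 * t)) * ∑' k, c k * Real.exp (-(ℓ k) ^ 2 / (4 * t))
        = ∑' k, c k * Real.exp (-(ℓ k ^ 2 - ℓ 0 ^ 2) / (4 * t)) := by
      rw [← tsum_mul_left]
      refine tsum_congr fun k => ?_
      rw [← mul_assoc, mul_comm (Real.exp _) (c k), mul_assoc, ← Real.exp_add,
        ← add_div]
      congr 3
      ring
    rw [h1, hs.tsum_eq_zero_add]
    simp [hT_def]
  -- nonnegativity of the tail
  have hT_nonneg : ∀ t : ℝ, 0 ≤ T t := by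
    intro t
    refine tsum_nonneg fun k => ?_
    exact mul_nonneg (hc (k + 1)).le (Real.exp_nonneg _)
  -- bounding constant
  set B : ℝ := ∑' k, c (k + 1) * Real.exp (-(ℓ (k + 1) ^ 2 - ℓ 0 ^ 2) / 4) with hB_def
  have hBsum : Summable fun k => c (k + 1) * Real.exp (-(ℓ (k + 1) ^ 2 - ℓ 0 ^ 2) / 4) := by
    refine (hsum2 1 one_pos).congr fun k => ?_
    norm_num
  -- upper bound for the tail on (0, 1]
  have hT_upper : ∀ t ∈ Set.Ioc (0 : ℝ) 1,
      T t ≤ B * Real.exp (δ / 4 - δ / (4 * t)) := by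
    intro t ht
    obtain ⟨ht0, ht1⟩ := ht
    have hu : (1 : ℝ) / 4 ≤ (4 * t)⁻¹ := by
      rw [one_div, inv_le_inv₀ (by norm_num) (by positivity)]
      linarith
    have hterm : ∀ k, c (k + 1) * Real.exp (-(ℓ (k + 1) ^ 2 - ℓ 0 ^ 2) / (4 * t))
        ≤ (c (k + 1) * Real.exp (-(ℓ (k + 1) ^ 2 - ℓ 0 ^ 2) / 4)) *
          Real.exp (δ / 4 - δ / (4 * t)) := by
      intro k
      rw [mul_assoc, ← Real.exp_add]
      refine mul_le_mul_of_nonneg_left (Real.exp_le_exp.mpr ?_) (hc (k + 1)).le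
      set d := ℓ (k + 1) ^ 2 - ℓ 0 ^ 2 with hd_def
      have hdk : δ ≤ d := hdδ k
      have hgoal : -d * (4 * t)⁻¹ ≤ -d / 4 + (δ / 4 - δ * (4 * t)⁻¹) := by
        nlinarith [mul_le_mul_of_nonneg_left hu (sub_nonneg.mpr hdk)]
      calc -d / (4 * t) = -d * (4 * t)⁻¹ := by rw [div_eq_mul_inv]
        _ ≤ -d / 4 + (δ / 4 - δ * (4 * t)⁻¹) := hgoal
        _ = -d / 4 + (δ / 4 - δ / (4 * t)) := by rw [div_eq_mul_inv δ (4 * t)]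
    calc T t ≤ ∑' k, (c (k + 1) * Real.exp (-(ℓ (k + 1) ^ 2 - ℓ 0 ^ 2) / 4)) *
          Real.exp (δ / 4 - δ / (4 * t)) :=
        Summable.tsum_le_tsum hterm (hsum2 t ht0) (hBsum.mul_right _)
      _ = B * Real.exp (δ / 4 - δ / (4 * t)) := by rw [tsum_mul_right]
  -- the upper bound tends to 0
  have hg : Tendsto (fun t : ℝ => δ / (4 * t)) (nhdsWithin 0 (Set.Ioi 0)) atTop := by
    have h1 : Tendsto (fun t : ℝ => (δ / 4) * t⁻¹) (nhdsWithin 0 (Set.Ioi 0)) atTop :=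
      (tendsto_inv_nhdsGT_zero).const_mul_atTop (by positivity)
    refine h1.congr fun t => ?_
    field_simp
  have hE : Tendsto (fun t : ℝ => B * Real.exp (δ / 4 - δ / (4 * t)))
      (nhdsWithin 0 (Set.Ioi 0)) (nhds 0) := by
    have h2 : Tendsto (fun t : ℝ => Real.exp (-(δ / (4 * t))))
        (nhdsWithin 0 (Set.Ioi 0)) (nhds 0) :=
      Real.tendsto_exp_neg_atTop_nhds_zero.comp hg
    have h3 : Tendsto (fun t : ℝ => (B * Real.exp (δ / 4)) * Real.exp (-(δ / (4 * t))))
        (nhdsWithin 0 (Set.Ioi 0)) (nhds ((B * Real.exp (δ / 4)) * 0)) :=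
      tendsto_const_nhds.mul h2
    rw [mul_zero] at h3
    refine h3.congr fun t => ?_
    rw [mul_assoc, ← Real.exp_add]
    ring_nf
  -- the tail tends to 0 by squeezing
  have hT0 : Tendsto T (nhdsWithin 0 (Set.Ioi 0)) (nhds 0) := by
    refine squeeze_zero' (Eventually.of_forall hT_nonneg) ?_ hE
    filter_upwards [Ioc_mem_nhdsGT_of_mem (Set.left_mem_Ico.mpr one_pos)] with t ht
    exact hT_upper t ht
  -- conclude
  have hfinal : Tendsto (fun t : ℝ => c 0 + T t) (nhdsWithin 0 (Set.Ioi 0))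
      (nhds (c 0 + 0)) := tendsto_const_nhds.add hT0
  rw [add_zero] at hfinal
  refine hfinal.congr' ?_
  filter_upwards [self_mem_nhdsWithin] with t ht
  exact (key t ht).symm
end

section
/- Let ℓ : ℕ → ℝ be strictly monotone increasing with ℓ 0 > 0, and let c : ℕ → ℝ with c k > 0 for all k. Assume that for every t > 0 the family k ↦ c k · exp(−(ℓ k)² / (4t)) is summable, and set f(t) = ∑'_k c k · exp(−(ℓ k)² / (4t)). Then: (a) for every ω with 0 < ω < ℓ 0, the function t ↦ exp(ω² / (4t)) · f(t) tends to 0 as t → 0 from the right; and (b) for every ω with ω > ℓ 0, the function t ↦ exp(ω² / (4t)) · f(t) tends to +∞ (to atTop) as t → 0 from the right. -/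
open Filter

theorem stmt_6 (ℓ c : ℕ → ℝ) (hℓ : StrictMono ℓ) (hℓ0 : 0 < ℓ 0)
    (hc : ∀ k, 0 < c k)
    (hsum : ∀ t > (0 : ℝ), Summable fun k => c k * Real.exp (-(ℓ k) ^ 2 / (4 * t)))
    (f : ℝ → ℝ) (hf : ∀ t, f t = ∑' k, c k * Real.exp (-(ℓ k) ^ 2 / (4 * t))) :
    (∀ ω : ℝ, 0 < ω → ω < ℓ 0 →
        Tendsto (fun t : ℝ => Real.exp (ω ^ 2 / (4 * t)) * f t)
          (nhdsWithin 0 (Set.Ioi 0)) (nhds 0)) ∧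
      (∀ ω : ℝ, ℓ 0 < ω →
        Tendsto (fun t : ℝ => Real.exp (ω ^ 2 / (4 * t)) * f t)
          (nhdsWithin 0 (Set.Ioi 0)) atTop) := by
  have hℓpos : ∀ k, 0 < ℓ k := fun k => lt_of_lt_of_le hℓ0 (hℓ.monotone (Nat.zero_le k))
  have hfnn : ∀ t : ℝ, 0 ≤ f t := by
    intro t
    rw [hf]
    exact tsum_nonneg fun k => mul_nonneg (hc k).le (Real.exp_pos _).le
  have hinv : Tendsto (fun t : ℝ => t⁻¹) (nhdsWithin 0 (Set.Ioi 0)) atTop :=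
    tendsto_inv_nhdsGT_zero
  have hinv4 : Tendsto (fun t : ℝ => (4 * t)⁻¹) (nhdsWithin 0 (Set.Ioi 0)) atTop := by
    simpa [mul_inv, mul_comm] using
      hinv.const_mul_atTop (show (0:ℝ) < 4⁻¹ by norm_num)
  constructor
  · intro ω hω hωℓ
    set C : ℝ := f 1 * Real.exp (ℓ 0 ^ 2 / 4) with hC
    -- key bound on (0,1]
    have key : ∀ t : ℝ, t ∈ Set.Ioc (0 : ℝ) 1 →
        Real.exp (ω ^ 2 / (4 * t)) * f t
          ≤ C * Real.exp ((ω ^ 2 - ℓ 0 ^ 2) * (4 * t)⁻¹) := by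
      intro t ⟨ht0, ht1⟩
      have h4t : (0 : ℝ) < 4 * t := by linarith
      have hft : f t ≤ f 1 * (Real.exp (ℓ 0 ^ 2 / 4) * Real.exp (-(ℓ 0) ^ 2 / (4 * t))) := by
        rw [hf t, hf 1]
        have hterm : ∀ k, c k * Real.exp (-(ℓ k) ^ 2 / (4 * t))
            ≤ (c k * Real.exp (-(ℓ k) ^ 2 / (4 * 1)))
              * (Real.exp (ℓ 0 ^ 2 / 4) * Real.exp (-(ℓ 0) ^ 2 / (4 * t))) := by
          intro k
          rw [mul_assoc, ← Real.exp_add, ← Real.exp_add]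
          refine mul_le_mul_of_nonneg_left (Real.exp_le_exp.2 ?_) (hc k).le
          have hk2 : ℓ 0 ^ 2 ≤ ℓ k ^ 2 :=
            pow_le_pow_left₀ hℓ0.le (hℓ.monotone (Nat.zero_le k)) 2
          have hdiv : (ℓ k ^ 2 - ℓ 0 ^ 2) / 4 ≤ (ℓ k ^ 2 - ℓ 0 ^ 2) / (4 * t) := by
            gcongr
            · linarith
          simp only [div_eq_mul_inv, mul_one] at hdiv ⊢
          linarith
        have hsR : Summable fun k => (c k * Real.exp (-(ℓ k) ^ 2 / (4 * 1)))
              * (Real.exp (ℓ 0 ^ 2 / 4) * Real.exp (-(ℓ 0) ^ 2 / (4 * t))) :=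
          (hsum 1 one_pos).mul_right _
        calc (∑' k, c k * Real.exp (-(ℓ k) ^ 2 / (4 * t)))
            ≤ ∑' k, (c k * Real.exp (-(ℓ k) ^ 2 / (4 * 1)))
                * (Real.exp (ℓ 0 ^ 2 / 4) * Real.exp (-(ℓ 0) ^ 2 / (4 * t))) :=
              Summable.tsum_le_tsum hterm (hsum t ht0) hsR
          _ = _ := tsum_mul_right
      calc Real.exp (ω ^ 2 / (4 * t)) * f t
          ≤ Real.exp (ω ^ 2 / (4 * t)) *
              (f 1 * (Real.exp (ℓ 0 ^ 2 / 4) * Real.exp (-(ℓ 0) ^ 2 / (4 * t)))) :=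
            mul_le_mul_of_nonneg_left hft (Real.exp_pos _).le
        _ = C * (Real.exp (ω ^ 2 / (4 * t)) * Real.exp (-(ℓ 0) ^ 2 / (4 * t))) := by ring
        _ = C * Real.exp ((ω ^ 2 - ℓ 0 ^ 2) * (4 * t)⁻¹) := by
            rw [← Real.exp_add]
            congr 1
            field_simp
            ring
    have hCnn : 0 ≤ C := mul_nonneg (hfnn 1) (Real.exp_pos _).le
    have hneg : ω ^ 2 - ℓ 0 ^ 2 < 0 := by nlinarith
    have hbot : Tendsto (fun t : ℝ => (ω ^ 2 - ℓ 0 ^ 2) * (4 * t)⁻¹)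
        (nhdsWithin 0 (Set.Ioi 0)) atBot := by
      exact hinv4.const_mul_atTop_of_neg hneg
    have hg0 : Tendsto (fun t : ℝ => C * Real.exp ((ω ^ 2 - ℓ 0 ^ 2) * (4 * t)⁻¹))
        (nhdsWithin 0 (Set.Ioi 0)) (nhds 0) := by
      have := (Real.tendsto_exp_atBot).comp hbot
      simpa using this.const_mul C
    refine squeeze_zero' ?_ ?_ hg0
    · filter_upwards [self_mem_nhdsWithin] with t ht
      exact mul_nonneg (Real.exp_pos _).le (hfnn t)
    · filter_upwards [Ioc_mem_nhdsGT_of_mem (Set.mem_Ico.2 ⟨le_refl 0, one_pos⟩)] with t ht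
      exact key t ht
  · intro ω hω
    have hpos : 0 < ω ^ 2 - ℓ 0 ^ 2 := by nlinarith
    have hbound : ∀ t : ℝ, t ∈ Set.Ioi (0 : ℝ) →
        c 0 * Real.exp ((ω ^ 2 - ℓ 0 ^ 2) * (4 * t)⁻¹)
          ≤ Real.exp (ω ^ 2 / (4 * t)) * f t := by
      intro t ht
      have ht' : (0 : ℝ) < t := ht
      have h4t : (0 : ℝ) < 4 * t := by linarith
      have hft : c 0 * Real.exp (-(ℓ 0) ^ 2 / (4 * t)) ≤ f t := by
        rw [hf t]
        exact Summable.le_tsum (hsum t ht) 0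
          (fun k _ => mul_nonneg (hc k).le (Real.exp_pos _).le)
      calc c 0 * Real.exp ((ω ^ 2 - ℓ 0 ^ 2) * (4 * t)⁻¹)
          = Real.exp (ω ^ 2 / (4 * t)) * (c 0 * Real.exp (-(ℓ 0) ^ 2 / (4 * t))) := by
            rw [mul_comm (Real.exp _), mul_assoc, ← Real.exp_add]
            congr 2
            field_simp
            ring
        _ ≤ Real.exp (ω ^ 2 / (4 * t)) * f t :=
            mul_le_mul_of_nonneg_left hft (Real.exp_pos _).le
    have htop : Tendsto (fun t : ℝ => c 0 * Real.exp ((ω ^ 2 - ℓ 0 ^ 2) * (4 * t)⁻¹))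
        (nhdsWithin 0 (Set.Ioi 0)) atTop := by
      have harg : Tendsto (fun t : ℝ => (ω ^ 2 - ℓ 0 ^ 2) * (4 * t)⁻¹)
          (nhdsWithin 0 (Set.Ioi 0)) atTop := hinv4.const_mul_atTop hpos
      exact (Real.tendsto_exp_atTop.comp harg).const_mul_atTop (hc 0)
    exact tendsto_atTop_mono' _
      (eventually_nhdsWithin_of_forall hbound) htop
end

section
/- Let ℓ, ℓ' : ℕ → ℝ be strictly monotone increasing with ℓ 0 > 0 and ℓ' 0 > 0, and let c, c' : ℕ → ℝ with c k > 0 and c' k > 0 for all k. Assume that for every t > 0 the families k ↦ c k · exp(−(ℓ k)²/(4t)) and k ↦ c' k · exp(−(ℓ' k)²/(4t)) are summable, and that ∑'_k c k · exp(−(ℓ k)²/(4t)) = ∑'_k c' k · exp(−(ℓ' k)²/(4t)) for every t > 0. Then ℓ = ℓ' and c = c'. -/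
open Real Filter Topology Finset

/-- `exp (r * s) → 0` as `s → ∞` when `r < 0`. -/
lemma aux_exp_to_zero {r : ℝ} (hr : r < 0) :
    Tendsto (fun s : ℝ => Real.exp (r * s)) atTop (𝓝 0) :=
  Real.tendsto_exp_atBot.comp ((tendsto_const_mul_atBot_of_neg hr).2 tendsto_id)

/-- The tail of a positive generalized Dirichlet series with exponents bounded
below by `δ > 0` tends to `0` as `s → ∞`. -/
lemma aux_tail (b d : ℕ → ℝ) (δ : ℝ) (hδ : 0 < δ) (hd : ∀ k, δ ≤ d k)
    (hb : ∀ k, 0 ≤ b k)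
    (hsum : ∀ s > (0 : ℝ), Summable fun k => b k * Real.exp (-(d k) * s)) :
    Tendsto (fun s : ℝ => ∑' k, b k * Real.exp (-(d k) * s)) atTop (𝓝 0) := by
  have hT : Summable fun k => b k * Real.exp (-(d k) * 1) := hsum 1 one_pos
  have hg : Tendsto (fun s : ℝ => Real.exp (-δ * (s - 1)) *
      ∑' k, b k * Real.exp (-(d k) * 1)) atTop (𝓝 0) := by
    have h1 : Tendsto (fun s : ℝ => Real.exp (-δ * (s - 1))) atTop (𝓝 0) := by
      have hbot : Tendsto (fun s : ℝ => -δ * (s - 1)) atTop atBot :=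
        (tendsto_const_mul_atBot_of_neg (neg_lt_zero.2 hδ)).2
          (tendsto_atTop_add_const_right atTop (-1 : ℝ) tendsto_id)
      exact Real.tendsto_exp_atBot.comp hbot
    simpa using h1.mul_const _
  apply tendsto_of_tendsto_of_tendsto_of_le_of_le' tendsto_const_nhds hg
  · filter_upwards [eventually_gt_atTop (0 : ℝ)] with s hs
    exact tsum_nonneg fun k => mul_nonneg (hb k) (Real.exp_pos _).le
  · filter_upwards [eventually_ge_atTop (1 : ℝ)] with s hs
    rw [← tsum_mul_left]
    have hs0 : (0 : ℝ) < s := lt_of_lt_of_le one_pos hs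
    refine Summable.tsum_le_tsum (fun k => ?_) (hsum s hs0) (hT.mul_left _)
    have hs1 : (0 : ℝ) ≤ s - 1 := by linarith
    have hcomb : Real.exp (-(d k) * s)
        = Real.exp (-(d k) * (s - 1)) * Real.exp (-(d k) * 1) := by
      rw [← Real.exp_add]; ring_nf
    rw [hcomb, ← mul_assoc, mul_comm (b k), mul_assoc]
    refine mul_le_mul_of_nonneg_right ?_ (mul_nonneg (hb k) (Real.exp_pos _).le)
    exact Real.exp_le_exp.2 (by nlinarith [hd k])

/-- Leading term extraction : `(∑' k, c k e^{-a k s}) e^{a 0 s} → c 0`. -/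
lemma aux_lead (a c : ℕ → ℝ) (ha : StrictMono a) (hc : ∀ k, 0 < c k)
    (hsum : ∀ s > (0 : ℝ), Summable fun k => c k * Real.exp (-(a k) * s)) :
    Tendsto (fun s : ℝ => (∑' k, c k * Real.exp (-(a k) * s)) * Real.exp (a 0 * s))
      atTop (𝓝 (c 0)) := by
  have hδ : 0 < a 1 - a 0 := sub_pos.2 (ha Nat.zero_lt_one)
  have htail : Tendsto
      (fun s : ℝ => ∑' k, c (k + 1) * Real.exp (-(a (k + 1) - a 0) * s)) atTop (𝓝 0) := by
    apply aux_tail _ _ (a 1 - a 0) hδ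
    · intro k
      have : a 1 ≤ a (k + 1) := ha.monotone (by omega)
      linarith
    · exact fun k => (hc _).le
    · intro s hs
      have h1 : Summable fun k => c (k + 1) * Real.exp (-(a (k + 1)) * s) :=
        (summable_nat_add_iff 1).2 (hsum s hs)
      have := h1.mul_right (Real.exp (a 0 * s))
      refine this.congr fun k => ?_
      rw [mul_assoc, ← Real.exp_add]; ring_nf
  have hEq : ∀ s > (0 : ℝ),
      (∑' k, c k * Real.exp (-(a k) * s)) * Real.exp (a 0 * s)
        = c 0 + ∑' k, c (k + 1) * Real.exp (-(a (k + 1) - a 0) * s) := by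
    intro s hs
    have hS := hsum s hs
    have h2 : (∑' k, c k * Real.exp (-(a k) * s)) * Real.exp (a 0 * s)
        = ∑' k, c k * Real.exp (-(a k - a 0) * s) := by
      rw [← tsum_mul_right]
      congr 1; funext k
      rw [mul_assoc, ← Real.exp_add]; ring_nf
    rw [h2]
    have hS2 : Summable fun k => c k * Real.exp (-(a k - a 0) * s) := by
      refine (hS.mul_right (Real.exp (a 0 * s))).congr fun k => ?_
      rw [mul_assoc, ← Real.exp_add]; ring_nf
    rw [Summable.tsum_eq_zero_add hS2]
    simp
  have hlim : Tendsto (fun s : ℝ =>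
      c 0 + ∑' k, c (k + 1) * Real.exp (-(a (k + 1) - a 0) * s)) atTop (𝓝 (c 0)) := by
    simpa using (tendsto_const_nhds (x := c 0)).add htail
  refine hlim.congr' ?_
  filter_upwards [eventually_gt_atTop (0 : ℝ)] with s hs
  exact (hEq s hs).symm

/-- If the series sums agree and `a 0 < a' 0`, contradiction. -/
lemma aux_lt (a a' c c' : ℕ → ℝ) (ha : StrictMono a) (ha' : StrictMono a')
    (hc : ∀ k, 0 < c k) (hc' : ∀ k, 0 < c' k)
    (hsum : ∀ s > (0 : ℝ), Summable fun k => c k * Real.exp (-(a k) * s))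
    (hsum' : ∀ s > (0 : ℝ), Summable fun k => c' k * Real.exp (-(a' k) * s))
    (heq : ∀ s > (0 : ℝ),
      ∑' k, c k * Real.exp (-(a k) * s) = ∑' k, c' k * Real.exp (-(a' k) * s))
    (hlt : a 0 < a' 0) : False := by
  have hF := aux_lead a c ha hc hsum
  have hG := aux_lead a' c' ha' hc' hsum'
  have hZ : Tendsto (fun s : ℝ =>
      ((∑' k, c' k * Real.exp (-(a' k) * s)) * Real.exp (a' 0 * s))
        * Real.exp ((a 0 - a' 0) * s)) atTop (𝓝 0) := by
    simpa using hG.mul (aux_exp_to_zero (sub_neg.2 hlt))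
  have hF0 : Tendsto (fun s : ℝ =>
      (∑' k, c k * Real.exp (-(a k) * s)) * Real.exp (a 0 * s)) atTop (𝓝 0) := by
    refine hZ.congr' ?_
    filter_upwards [eventually_gt_atTop (0 : ℝ)] with s hs
    rw [heq s hs, mul_assoc, ← Real.exp_add]
    congr 2
    ring
  have : c 0 = 0 := tendsto_nhds_unique hF hF0
  exact absurd this (hc 0).ne'

/-- Uniqueness for generalized Dirichlet series with positive coefficients. -/
lemma aux_main (a a' c c' : ℕ → ℝ) (ha : StrictMono a) (ha' : StrictMono a')
    (hc : ∀ k, 0 < c k) (hc' : ∀ k, 0 < c' k)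
    (hsum : ∀ s > (0 : ℝ), Summable fun k => c k * Real.exp (-(a k) * s))
    (hsum' : ∀ s > (0 : ℝ), Summable fun k => c' k * Real.exp (-(a' k) * s))
    (heq : ∀ s > (0 : ℝ),
      ∑' k, c k * Real.exp (-(a k) * s) = ∑' k, c' k * Real.exp (-(a' k) * s)) :
    ∀ n, a n = a' n ∧ c n = c' n := by
  intro n
  induction n using Nat.strong_induction_on with
  | _ n IH =>
    -- tails agree
    have hteq : ∀ s > (0 : ℝ),
        ∑' k, c (k + n) * Real.exp (-(a (k + n)) * s)
          = ∑' k, c' (k + n) * Real.exp (-(a' (k + n)) * s) := by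
      intro s hs
      have h1 := Summable.sum_add_tsum_nat_add (f := fun k => c k * Real.exp (-(a k) * s)) n (hsum s hs)
      have h2 := Summable.sum_add_tsum_nat_add (f := fun k => c' k * Real.exp (-(a' k) * s)) n (hsum' s hs)
      have hfront : ∑ i ∈ range n, c i * Real.exp (-(a i) * s)
          = ∑ i ∈ range n, c' i * Real.exp (-(a' i) * s) := by
        refine Finset.sum_congr rfl fun i hi => ?_
        obtain ⟨hai, hci⟩ := IH i (mem_range.1 hi)
        rw [hai, hci]
      have := heq s hs
      rw [← h1, ← h2, hfront] at this
      linarith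
    have hmono : StrictMono fun k => a (k + n) := fun i j h => ha (by omega)
    have hmono' : StrictMono fun k => a' (k + n) := fun i j h => ha' (by omega)
    have hs1 : ∀ s > (0 : ℝ), Summable fun k => c (k + n) * Real.exp (-(a (k + n)) * s) :=
      fun s hs =>
        (summable_nat_add_iff (f := fun k => c k * Real.exp (-(a k) * s)) n).2 (hsum s hs)
    have hs2 : ∀ s > (0 : ℝ), Summable fun k => c' (k + n) * Real.exp (-(a' (k + n)) * s) :=
      fun s hs =>
        (summable_nat_add_iff (f := fun k => c' k * Real.exp (-(a' k) * s)) n).2 (hsum' s hs)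
    have heq0 : a (0 + n) = a' (0 + n) := by
      rcases lt_trichotomy (a (0 + n)) (a' (0 + n)) with h | h | h
      · exact absurd (aux_lt _ _ _ _ hmono hmono'
          (fun k => hc _) (fun k => hc' _) hs1 hs2 hteq h) not_false
      · exact h
      · exact absurd (aux_lt _ _ _ _ hmono' hmono
          (fun k => hc' _) (fun k => hc _) hs2 hs1
          (fun s hs => (hteq s hs).symm) h) not_false
    have hF := aux_lead _ _ hmono (fun k => hc _) hs1
    have hG := aux_lead _ _ hmono' (fun k => hc' _) hs2
    have hF' : Tendsto (fun s : ℝ =>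
        (∑' k, c (k + n) * Real.exp (-(a (k + n)) * s))
          * Real.exp (a (0 + n) * s)) atTop (𝓝 (c' (0 + n))) := by
      refine hG.congr' ?_
      filter_upwards [eventually_gt_atTop (0 : ℝ)] with s hs
      rw [hteq s hs, heq0]
    have hcc : c (0 + n) = c' (0 + n) := tendsto_nhds_unique hF hF'
    constructor
    · simpa using heq0
    · simpa using hcc

theorem stmt_8 (ℓ ℓ' c c' : ℕ → ℝ)
    (hℓ : StrictMono ℓ) (hℓ' : StrictMono ℓ')
    (hℓ0 : 0 < ℓ 0) (hℓ'0 : 0 < ℓ' 0)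
    (hc : ∀ k, 0 < c k) (hc' : ∀ k, 0 < c' k)
    (hsum : ∀ t > (0 : ℝ), Summable fun k => c k * Real.exp (-(ℓ k) ^ 2 / (4 * t)))
    (hsum' : ∀ t > (0 : ℝ), Summable fun k => c' k * Real.exp (-(ℓ' k) ^ 2 / (4 * t)))
    (heq : ∀ t > (0 : ℝ),
      ∑' k, c k * Real.exp (-(ℓ k) ^ 2 / (4 * t)) =
        ∑' k, c' k * Real.exp (-(ℓ' k) ^ 2 / (4 * t))) :
    ℓ = ℓ' ∧ c = c' := by
  have hℓpos : ∀ k, 0 < ℓ k := fun k => lt_of_lt_of_le hℓ0 (hℓ.monotone (Nat.zero_le k))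
  have hℓ'pos : ∀ k, 0 < ℓ' k := fun k => lt_of_lt_of_le hℓ'0 (hℓ'.monotone (Nat.zero_le k))
  set a : ℕ → ℝ := fun k => (ℓ k) ^ 2 with ha_def
  set a' : ℕ → ℝ := fun k => (ℓ' k) ^ 2 with ha'_def
  have hre : ∀ (x s : ℝ), 0 < s → -x / (4 * (1 / (4 * s))) = -x * s := by
    intro x s hs; field_simp
  have ht : ∀ s : ℝ, 0 < s → (0 : ℝ) < 1 / (4 * s) := fun s hs => by positivity
  have hsum2 : ∀ s > (0 : ℝ), Summable fun k => c k * Real.exp (-(a k) * s) := by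
    intro s hs
    refine (hsum (1 / (4 * s)) (ht s hs)).congr fun k => ?_
    rw [hre _ s hs]
  have hsum2' : ∀ s > (0 : ℝ), Summable fun k => c' k * Real.exp (-(a' k) * s) := by
    intro s hs
    refine (hsum' (1 / (4 * s)) (ht s hs)).congr fun k => ?_
    rw [hre _ s hs]
  have heq2 : ∀ s > (0 : ℝ),
      ∑' k, c k * Real.exp (-(a k) * s) = ∑' k, c' k * Real.exp (-(a' k) * s) := by
    intro s hs
    have := heq (1 / (4 * s)) (ht s hs)
    simp only [hre _ s hs] at this
    convert this using 3
  have hamono : StrictMono a := fun i j h =>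
    pow_lt_pow_left₀ (hℓ h) (hℓpos i).le two_ne_zero
  have hamono' : StrictMono a' := fun i j h =>
    pow_lt_pow_left₀ (hℓ' h) (hℓ'pos i).le two_ne_zero
  have hmain := aux_main a a' c c' hamono hamono' hc hc' hsum2 hsum2' heq2
  constructor
  · funext k
    have h : ℓ k ^ 2 = ℓ' k ^ 2 := (hmain k).1
    calc ℓ k = Real.sqrt (ℓ k ^ 2) := (Real.sqrt_sq (hℓpos k).le).symm
      _ = Real.sqrt (ℓ' k ^ 2) := by rw [h]
      _ = ℓ' k := Real.sqrt_sq (hℓ'pos k).le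
  · funext k
    exact (hmain k).2
end

section
/- Let λ, λ' : ℕ → ℝ be strictly monotone decreasing and let m, m' : ℕ → ℝ with m k > 0 and m' k > 0 for all k. Assume that for every t > 0 the families k ↦ m k · exp((λ k)·t) and k ↦ m' k · exp((λ' k)·t) are summable, and that ∑'_k m k · exp((λ k)·t) = ∑'_k m' k · exp((λ' k)·t) for every t > 0. Then λ = λ' and m = m'. -/
/-!
Multiplying by `exp (-λ₀ t)` and using dominated convergence,
`exp (-λ₀ t) * ∑' k, m k * exp (λ k * t) → m₀` as `t → ∞`, because every other exponent is
strictly smaller than `λ₀`. A function `F` can satisfy `exp (-a t) * F t → b > 0` for only one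
pair `(a, b)`, so the sum determines the leading exponent and its coefficient. Subtracting the
leading term and repeating recovers the whole sequence.
-/

open Filter Topology Real

noncomputable def expSum (lam m : ℕ → ℝ) (t : ℝ) : ℝ := ∑' k, m k * exp (lam k * t)

theorem le_of_tendsto_exp_neg_mul {F : ℝ → ℝ} {a a' b b' : ℝ} (hb' : 0 < b')
    (h : Tendsto (fun t => exp (-a * t) * F t) atTop (𝓝 b))
    (h' : Tendsto (fun t => exp (-a' * t) * F t) atTop (𝓝 b')) : a' ≤ a := by
  by_contra! hlt
  have hgrow : Tendsto (fun t => exp ((a' - a) * t) * (exp (-a' * t) * F t)) atTop atTop :=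
    (tendsto_exp_atTop.comp (tendsto_id.const_mul_atTop (sub_pos.2 hlt))).atTop_mul_pos hb' h'
  refine not_tendsto_nhds_of_tendsto_atTop hgrow b (h.congr fun t => ?_)
  rw [← mul_assoc, ← exp_add]
  ring_nf

theorem eq_of_tendsto_exp_neg_mul {F : ℝ → ℝ} {a a' b b' : ℝ} (hb : 0 < b) (hb' : 0 < b')
    (h : Tendsto (fun t => exp (-a * t) * F t) atTop (𝓝 b))
    (h' : Tendsto (fun t => exp (-a' * t) * F t) atTop (𝓝 b')) : a = a' ∧ b = b' := by
  obtain rfl := le_antisymm (le_of_tendsto_exp_neg_mul hb h' h) (le_of_tendsto_exp_neg_mul hb' h h')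
  exact ⟨rfl, tendsto_nhds_unique h h'⟩

section

variable {lam lam' m m' : ℕ → ℝ}

theorem tendsto_exp_neg_mul_expSum (hlam : ∀ k ≠ 0, lam k < lam 0) (hm : ∀ k, 0 ≤ m k)
    {t₀ : ℝ} (hsum : Summable fun k => m k * exp (lam k * t₀)) :
    Tendsto (fun t => exp (-lam 0 * t) * expSum lam m t) atTop (𝓝 (m 0)) := by
  have hrw (t : ℝ) :
      exp (-lam 0 * t) * expSum lam m t = ∑' k, m k * exp ((lam k - lam 0) * t) := by
    rw [expSum, ← tsum_mul_left]
    congr 1 with k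
    rw [mul_left_comm, ← exp_add]
    ring_nf
  simp only [hrw]
  have hlimit (k : ℕ) : Tendsto (fun t => m k * exp ((lam k - lam 0) * t)) atTop
      (𝓝 (if k = 0 then m 0 else 0)) := by
    split_ifs with hk
    · subst hk
      simp
    · simpa using ((tendsto_exp_atBot.comp
        (tendsto_id.const_mul_atTop_of_neg (sub_neg.2 (hlam k hk)))).const_mul (m k))
  have hbound : ∀ᶠ t in atTop, ∀ k,
      ‖m k * exp ((lam k - lam 0) * t)‖ ≤ exp (-lam 0 * t₀) * (m k * exp (lam k * t₀)) := by
    filter_upwards [eventually_ge_atTop t₀] with t ht k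
    have hk : lam k - lam 0 ≤ 0 := by
      rcases eq_or_ne k 0 with rfl | hk
      · simp
      · exact (sub_neg.2 (hlam k hk)).le
    rw [Real.norm_of_nonneg (mul_nonneg (hm k) (exp_pos _).le), mul_left_comm, ← exp_add]
    gcongr
    · exact hm k
    · nlinarith
  simpa [tsum_ite_eq] using tendsto_tsum_of_dominated_convergence (hsum.mul_left _) hlimit hbound

theorem head_eq_of_expSum_eventuallyEq (hlam : ∀ k ≠ 0, lam k < lam 0)
    (hlam' : ∀ k ≠ 0, lam' k < lam' 0) (hm : ∀ k, 0 < m k) (hm' : ∀ k, 0 < m' k) {t₀ t₀' : ℝ}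
    (hsum : Summable fun k => m k * exp (lam k * t₀))
    (hsum' : Summable fun k => m' k * exp (lam' k * t₀'))
    (heq : expSum lam m =ᶠ[atTop] expSum lam' m') : lam 0 = lam' 0 ∧ m 0 = m' 0 := by
  have h := tendsto_exp_neg_mul_expSum hlam (fun k => (hm k).le) hsum
  have h' := tendsto_exp_neg_mul_expSum hlam' (fun k => (hm' k).le) hsum'
  exact eq_of_tendsto_exp_neg_mul (hm 0) (hm' 0) h
    (h'.congr' (heq.mono fun t ht => by simp only [ht]))

theorem expSum_shift_eq_add (n : ℕ) {t : ℝ} (hsum : Summable fun k => m k * exp (lam k * t)) :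
    expSum (fun k => lam (k + n)) (fun k => m (k + n)) t =
      m n * exp (lam n * t) + expSum (fun k => lam (k + (n + 1))) (fun k => m (k + (n + 1))) t := by
  simpa [expSum, add_right_comm _ 1 n, add_assoc]
    using ((summable_nat_add_iff n).2 hsum).tsum_eq_zero_add

theorem eq_of_expSum_shift_eq (hlam : StrictAnti lam) (hlam' : StrictAnti lam')
    (hm : ∀ k, 0 < m k) (hm' : ∀ k, 0 < m' k)
    (hsum : ∀ t > 0, Summable fun k => m k * exp (lam k * t))
    (hsum' : ∀ t > 0, Summable fun k => m' k * exp (lam' k * t)) {n : ℕ}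
    (heq : ∀ t > 0, expSum (fun k => lam (k + n)) (fun k => m (k + n)) t =
      expSum (fun k => lam' (k + n)) (fun k => m' (k + n)) t) : lam n = lam' n ∧ m n = m' n := by
  have hsum_n : Summable fun k => m (k + n) * exp (lam (k + n) * 1) :=
    (summable_nat_add_iff n).2 (hsum 1 one_pos)
  have hsum_n' : Summable fun k => m' (k + n) * exp (lam' (k + n) * 1) :=
    (summable_nat_add_iff n).2 (hsum' 1 one_pos)
  simpa using head_eq_of_expSum_eventuallyEq (fun k hk => hlam (by omega))
    (fun k hk => hlam' (by omega)) (fun k => hm _) (fun k => hm' _) hsum_n hsum_n'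
    ((eventually_gt_atTop 0).mono heq)

theorem expSum_shift_eq (hlam : StrictAnti lam) (hlam' : StrictAnti lam')
    (hm : ∀ k, 0 < m k) (hm' : ∀ k, 0 < m' k)
    (hsum : ∀ t > 0, Summable fun k => m k * exp (lam k * t))
    (hsum' : ∀ t > 0, Summable fun k => m' k * exp (lam' k * t))
    (heq : ∀ t > 0, expSum lam m t = expSum lam' m' t) (n : ℕ) :
    ∀ t > 0, expSum (fun k => lam (k + n)) (fun k => m (k + n)) t =
      expSum (fun k => lam' (k + n)) (fun k => m' (k + n)) t := by
  induction n with
  | zero => simpa using heq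
  | succ n ih =>
    obtain ⟨hlam_n, hm_n⟩ := eq_of_expSum_shift_eq hlam hlam' hm hm' hsum hsum' ih
    intro t ht
    have := ih t ht
    rwa [expSum_shift_eq_add n (hsum t ht), expSum_shift_eq_add n (hsum' t ht), hlam_n, hm_n,
      add_right_inj] at this

end

theorem stmt_9 (lam lam' m m' : ℕ → ℝ)
    (hlam : StrictAnti lam) (hlam' : StrictAnti lam')
    (hm : ∀ k, 0 < m k) (hm' : ∀ k, 0 < m' k)
    (hsum : ∀ t > (0 : ℝ), Summable fun k => m k * Real.exp (lam k * t))
    (hsum' : ∀ t > (0 : ℝ), Summable fun k => m' k * Real.exp (lam' k * t))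
    (heq : ∀ t > (0 : ℝ),
      ∑' k, m k * Real.exp (lam k * t) = ∑' k, m' k * Real.exp (lam' k * t)) :
    lam = lam' ∧ m = m' := by
  have h (n : ℕ) : lam n = lam' n ∧ m n = m' n :=
    eq_of_expSum_shift_eq hlam hlam' hm hm' hsum hsum'
      (expSum_shift_eq hlam hlam' hm hm' hsum hsum' heq n)
  exact ⟨funext fun n => (h n).1, funext fun n => (h n).2⟩
end

section
/- Let m : ℝ with m > 1 and let n : ℕ. Let h, h' : Fin (n+1) → SL(2, ℝ) with h 0 = h' 0 = diag(m, m⁻¹) (the element of SL(2,ℝ) with matrix !![m, 0; 0, m⁻¹]). Assume: (i) the subgroup of SL(2, ℝ) generated by the range of h is discrete in the subspace topology, and likewise for h'; (ii) for every i ≠ 0, the matrix of h i is not diagonal and the matrix of h' i is not diagonal; (iii) trace(h i) = trace(h' i) for all i; (iv) trace(h i · h j) = trace(h' i · h' j) for all i < j; (v) trace(h i · h j · h k) = trace(h' i · h' j · h' k) for all i < j < k. Then there exist nonzero real numbers u, v such that for every i, the matrix of h' i equals D · (matrix of h i) · D⁻¹, where D = Matrix.diagonal ![u, v]. -/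
open Matrix MatrixGroups

noncomputable instance : TopologicalSpace (SL(2, ℝ)) :=
  TopologicalSpace.induced (fun A => (A : Matrix (Fin 2) (Fin 2) ℝ)) inferInstance

private lemma core_discrete {S : Subgroup (SL(2,ℝ))} (hS : DiscreteTopology S)
    (r : ℕ → SL(2, ℝ)) (hmem : ∀ k, r k ∈ S) (hne : ∀ k, r k ≠ 1)
    (hconv : Filter.Tendsto (fun k => ((r k : SL(2, ℝ)) : Matrix (Fin 2) (Fin 2) ℝ))
      Filter.atTop (nhds 1)) : False := by
  have hind : Topology.IsInducing (fun A : SL(2,ℝ) => (A : Matrix (Fin 2) (Fin 2) ℝ)) := ⟨rfl⟩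
  have hind2 : Topology.IsInducing
      (fun x : S => ((x : SL(2,ℝ)) : Matrix (Fin 2) (Fin 2) ℝ)) :=
    hind.comp Topology.IsInducing.subtypeVal
  have ht : Filter.Tendsto (fun k => (⟨r k, hmem k⟩ : S)) Filter.atTop (nhds 1) := by
    rw [hind2.tendsto_nhds_iff]
    simpa [Function.comp_def] using hconv
  rw [nhds_discrete, Filter.tendsto_pure] at ht
  obtain ⟨k, hk⟩ := ht.exists
  exact hne k (by simpa [Subtype.ext_iff] using hk)

private lemma diag_pow (m w : ℝ) (k : ℕ) :
    (!![m, 0; 0, w] : Matrix (Fin 2) (Fin 2) ℝ) ^ k = !![m ^ k, 0; 0, w ^ k] := by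
  have hdg : (!![m, 0; 0, w] : Matrix (Fin 2) (Fin 2) ℝ) = Matrix.diagonal ![m, w] := by
    ext i j; fin_cases i <;> fin_cases j <;> simp [Matrix.diagonal]
  have hdg2 : (!![m ^ k, 0; 0, w ^ k] : Matrix (Fin 2) (Fin 2) ℝ)
      = Matrix.diagonal ![m ^ k, w ^ k] := by
    ext i j; fin_cases i <;> fin_cases j <;> simp [Matrix.diagonal]
  rw [hdg, Matrix.diagonal_pow]
  ext i j; fin_cases i <;> fin_cases j <;> simp [Matrix.diagonal, Pi.pow_apply]

private lemma upper_contra {S : Subgroup (SL(2,ℝ))} (hS : DiscreteTopology S)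
    (m : ℝ) (hm : 1 < m) (g p : SL(2,ℝ)) (hgS : g ∈ S) (hpS : p ∈ S)
    (hg : (g : Matrix (Fin 2) (Fin 2) ℝ) = !![m, 0; 0, m⁻¹])
    (s : ℝ) (hs : s ≠ 0)
    (hp : (p : Matrix (Fin 2) (Fin 2) ℝ) = !![1, s; 0, 1]) : False := by
  have hm0 : (0:ℝ) < m := lt_trans one_pos hm
  have hmw : m * m⁻¹ = 1 := mul_inv_cancel₀ hm0.ne'
  have hw0 : (0:ℝ) < m⁻¹ := inv_pos.mpr hm0
  have hw1 : m⁻¹ < 1 := by nlinarith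
  set x : ℝ := m⁻¹ * m⁻¹ with hxdef
  have hx0 : (0:ℝ) < x := mul_pos hw0 hw0
  have hx1 : |x| < 1 := by rw [abs_of_pos hx0]; nlinarith
  have hginv : ((g⁻¹ : SL(2,ℝ)) : Matrix (Fin 2) (Fin 2) ℝ) = !![m⁻¹, 0; 0, m] := by
    rw [Matrix.SpecialLinearGroup.coe_inv, hg, Matrix.adjugate_fin_two]; norm_num
  have hpowk : ∀ k : ℕ, ((g ^ k : SL(2,ℝ)) : Matrix (Fin 2) (Fin 2) ℝ)
      = !![m ^ k, 0; 0, m⁻¹ ^ k] := by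
    intro k; rw [Matrix.SpecialLinearGroup.coe_pow, hg, diag_pow]
  have hipowk : ∀ k : ℕ, ((g⁻¹ ^ k : SL(2,ℝ)) : Matrix (Fin 2) (Fin 2) ℝ)
      = !![m⁻¹ ^ k, 0; 0, m ^ k] := by
    intro k; rw [Matrix.SpecialLinearGroup.coe_pow, hginv, diag_pow]
  set r : ℕ → SL(2,ℝ) := fun k => g⁻¹ ^ k * p * g ^ k with hrdef
  have hcancel : ∀ k : ℕ, m ^ k * m⁻¹ ^ k = 1 := by
    intro k; rw [← mul_pow, hmw, one_pow]
  have hrk : ∀ k, ((r k : SL(2,ℝ)) : Matrix (Fin 2) (Fin 2) ℝ) = !![1, s * x ^ k; 0, 1] := by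
    intro k
    rw [hrdef]
    rw [Matrix.SpecialLinearGroup.coe_mul, Matrix.SpecialLinearGroup.coe_mul,
      hipowk, hp, hpowk, Matrix.mul_fin_two, Matrix.mul_fin_two]
    have h1 := hcancel k
    ext i j; fin_cases i <;> fin_cases j <;>
      simp [hxdef] <;> ring_nf <;> nlinarith [hcancel k]
  have hmemk : ∀ k, r k ∈ S := fun k =>
    S.mul_mem (S.mul_mem (S.pow_mem (S.inv_mem hgS) k) hpS) (S.pow_mem hgS k)
  have hne : ∀ k, r k ≠ 1 := by
    intro k e
    have h2 := congrArg (fun M : SL(2,ℝ) => (M : Matrix (Fin 2) (Fin 2) ℝ) 0 1) e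
    simp [hrk k] at h2
    rcases h2 with h2 | ⟨h2, _⟩
    · exact hs h2
    · exact hx0.ne' h2
  have hconv : Filter.Tendsto (fun k => ((r k : SL(2,ℝ)) : Matrix (Fin 2) (Fin 2) ℝ))
      Filter.atTop (nhds 1) := by
    simp only [hrk]
    have h1 : (1 : Matrix (Fin 2) (Fin 2) ℝ) = !![1, 0; 0, 1] := by
      rw [Matrix.one_fin_two]
    rw [h1]
    refine tendsto_pi_nhds.mpr ?_
    intro i
    rw [tendsto_pi_nhds]
    intro j
    fin_cases i <;> fin_cases j <;> simp
    simpa using (tendsto_pow_atTop_nhds_zero_of_abs_lt_one hx1).const_mul s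
  exact core_discrete hS r hmemk hne hconv

private lemma lower_contra {S : Subgroup (SL(2,ℝ))} (hS : DiscreteTopology S)
    (m : ℝ) (hm : 1 < m) (g p : SL(2,ℝ)) (hgS : g ∈ S) (hpS : p ∈ S)
    (hg : (g : Matrix (Fin 2) (Fin 2) ℝ) = !![m, 0; 0, m⁻¹])
    (s : ℝ) (hs : s ≠ 0)
    (hp : (p : Matrix (Fin 2) (Fin 2) ℝ) = !![1, 0; s, 1]) : False := by
  have hm0 : (0:ℝ) < m := lt_trans one_pos hm
  have hmw : m * m⁻¹ = 1 := mul_inv_cancel₀ hm0.ne'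
  have hw0 : (0:ℝ) < m⁻¹ := inv_pos.mpr hm0
  have hw1 : m⁻¹ < 1 := by nlinarith
  set x : ℝ := m⁻¹ * m⁻¹ with hxdef
  have hx0 : (0:ℝ) < x := mul_pos hw0 hw0
  have hx1 : |x| < 1 := by rw [abs_of_pos hx0]; nlinarith
  have hginv : ((g⁻¹ : SL(2,ℝ)) : Matrix (Fin 2) (Fin 2) ℝ) = !![m⁻¹, 0; 0, m] := by
    rw [Matrix.SpecialLinearGroup.coe_inv, hg, Matrix.adjugate_fin_two]; norm_num
  have hpowk : ∀ k : ℕ, ((g ^ k : SL(2,ℝ)) : Matrix (Fin 2) (Fin 2) ℝ)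
      = !![m ^ k, 0; 0, m⁻¹ ^ k] := by
    intro k; rw [Matrix.SpecialLinearGroup.coe_pow, hg, diag_pow]
  have hipowk : ∀ k : ℕ, ((g⁻¹ ^ k : SL(2,ℝ)) : Matrix (Fin 2) (Fin 2) ℝ)
      = !![m⁻¹ ^ k, 0; 0, m ^ k] := by
    intro k; rw [Matrix.SpecialLinearGroup.coe_pow, hginv, diag_pow]
  set r : ℕ → SL(2,ℝ) := fun k => g ^ k * p * g⁻¹ ^ k with hrdef
  have hcancel : ∀ k : ℕ, m ^ k * m⁻¹ ^ k = 1 := by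
    intro k; rw [← mul_pow, hmw, one_pow]
  have hrk : ∀ k, ((r k : SL(2,ℝ)) : Matrix (Fin 2) (Fin 2) ℝ) = !![1, 0; s * x ^ k, 1] := by
    intro k
    rw [hrdef]
    rw [Matrix.SpecialLinearGroup.coe_mul, Matrix.SpecialLinearGroup.coe_mul,
      hpowk, hp, hipowk, Matrix.mul_fin_two, Matrix.mul_fin_two]
    have h1 := hcancel k
    ext i j; fin_cases i <;> fin_cases j <;>
      simp [hxdef] <;> ring_nf <;> nlinarith [hcancel k]
  have hmemk : ∀ k, r k ∈ S := fun k =>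
    S.mul_mem (S.mul_mem (S.pow_mem hgS k) hpS) (S.pow_mem (S.inv_mem hgS) k)
  have hne : ∀ k, r k ≠ 1 := by
    intro k e
    have h2 := congrArg (fun M : SL(2,ℝ) => (M : Matrix (Fin 2) (Fin 2) ℝ) 1 0) e
    simp [hrk k] at h2
    rcases h2 with h2 | ⟨h2, _⟩
    · exact hs h2
    · exact hx0.ne' h2
  have hconv : Filter.Tendsto (fun k => ((r k : SL(2,ℝ)) : Matrix (Fin 2) (Fin 2) ℝ))
      Filter.atTop (nhds 1) := by
    simp only [hrk]
    have h1 : (1 : Matrix (Fin 2) (Fin 2) ℝ) = !![1, 0; 0, 1] := by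
      rw [Matrix.one_fin_two]
    rw [h1]
    refine tendsto_pi_nhds.mpr ?_
    intro i
    rw [tendsto_pi_nhds]
    intro j
    fin_cases i <;> fin_cases j <;> simp
    simpa using (tendsto_pow_atTop_nhds_zero_of_abs_lt_one hx1).const_mul s
  exact core_discrete hS r hmemk hne hconv

private lemma offdiag_ne (m : ℝ) (hm : 1 < m) {n : ℕ} (h : Fin (n+1) → SL(2,ℝ))
    (h0 : ((h 0 : SL(2,ℝ)) : Matrix (Fin 2) (Fin 2) ℝ) = !![m, 0; 0, m⁻¹])
    (hdisc : DiscreteTopology (Subgroup.closure (Set.range h) : Subgroup (SL(2,ℝ))))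
    (i : Fin (n+1)) (hnd : ¬ ((h i : SL(2,ℝ)) : Matrix (Fin 2) (Fin 2) ℝ).IsDiag) :
    ((h i : SL(2,ℝ)) : Matrix (Fin 2) (Fin 2) ℝ) 0 1 ≠ 0 ∧
      ((h i : SL(2,ℝ)) : Matrix (Fin 2) (Fin 2) ℝ) 1 0 ≠ 0 := by
  set S : Subgroup (SL(2,ℝ)) := Subgroup.closure (Set.range h) with hSdef
  have hgS : h 0 ∈ S := Subgroup.subset_closure (Set.mem_range_self 0)
  have hiS : h i ∈ S := Subgroup.subset_closure (Set.mem_range_self i)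
  set A : Matrix (Fin 2) (Fin 2) ℝ := ((h i : SL(2,ℝ)) : Matrix (Fin 2) (Fin 2) ℝ) with hAdef
  have hdet : A 0 0 * A 1 1 - A 0 1 * A 1 0 = 1 := by
    rw [← Matrix.det_fin_two]; exact (h i).prop
  have hm0 : (0:ℝ) < m := lt_trans one_pos hm
  have hmw : m * m⁻¹ = 1 := mul_inv_cancel₀ hm0.ne'
  have hw0 : (0:ℝ) < m⁻¹ := inv_pos.mpr hm0
  have hw1 : m⁻¹ < 1 := by nlinarith
  have hbc : ¬ (A 0 1 = 0 ∧ A 1 0 = 0) := by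
    rintro ⟨hb, hc⟩
    apply hnd
    intro r t hrt
    fin_cases r <;> fin_cases t <;> first | exact absurd rfl hrt | assumption
  have hHinv : (((h 0)⁻¹ : SL(2,ℝ)) : Matrix (Fin 2) (Fin 2) ℝ) = !![m⁻¹, 0; 0, m] := by
    rw [Matrix.SpecialLinearGroup.coe_inv, h0, Matrix.adjugate_fin_two]; norm_num
  constructor
  · -- suppose b = 0; lower triangular, use lower_contra
    intro hb
    have hc : A 1 0 ≠ 0 := fun hc => hbc ⟨hb, hc⟩
    have had : A 0 0 * A 1 1 = 1 := by rw [← hdet, hb]; ring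
    have hd : A 1 1 ≠ 0 := by intro e; rw [e] at had; simp at had
    have hA : A = !![A 0 0, 0; A 1 0, A 1 1] := by
      conv_lhs => rw [Matrix.eta_fin_two A]
      rw [hb]
    have hAinv : (((h i)⁻¹ : SL(2,ℝ)) : Matrix (Fin 2) (Fin 2) ℝ)
        = !![A 1 1, 0; -(A 1 0), A 0 0] := by
      rw [Matrix.SpecialLinearGroup.coe_inv, ← hAdef, Matrix.adjugate_fin_two, hb]; norm_num
    set s : ℝ := A 1 0 * A 1 1 * (1 - m⁻¹ * m⁻¹) with hsdef
    have hs : s ≠ 0 := by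
      apply mul_ne_zero (mul_ne_zero hc hd); nlinarith
    refine lower_contra hdisc m hm (h 0) (h i * h 0 * (h i)⁻¹ * (h 0)⁻¹) hgS
      (S.mul_mem (S.mul_mem (S.mul_mem hiS hgS) (S.inv_mem hiS)) (S.inv_mem hgS)) h0 s hs ?_
    rw [Matrix.SpecialLinearGroup.coe_mul, Matrix.SpecialLinearGroup.coe_mul,
      Matrix.SpecialLinearGroup.coe_mul, ← hAdef, hA, h0, hAinv, hHinv,
      Matrix.mul_fin_two, Matrix.mul_fin_two, Matrix.mul_fin_two]
    ext r t; fin_cases r <;> fin_cases t <;> simp [hsdef] <;> ring_nf <;>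
      first
        | rfl
        | linear_combination (A 1 0 * A 1 1) * hmw
        | linear_combination (m * m⁻¹) * had + hmw
        | nlinarith [had, hmw]
  · -- suppose c = 0; upper triangular, use upper_contra
    intro hc
    have hb : A 0 1 ≠ 0 := fun hb => hbc ⟨hb, hc⟩
    have had : A 0 0 * A 1 1 = 1 := by rw [← hdet, hc]; ring
    have ha : A 0 0 ≠ 0 := by intro e; rw [e] at had; simp at had
    have hA : A = !![A 0 0, A 0 1; 0, A 1 1] := by
      conv_lhs => rw [Matrix.eta_fin_two A]
      rw [hc]
    have hAinv : (((h i)⁻¹ : SL(2,ℝ)) : Matrix (Fin 2) (Fin 2) ℝ)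
        = !![A 1 1, -(A 0 1); 0, A 0 0] := by
      rw [Matrix.SpecialLinearGroup.coe_inv, ← hAdef, Matrix.adjugate_fin_two, hc]; norm_num
    set s : ℝ := A 0 0 * A 0 1 * (1 - m * m) with hsdef
    have hs : s ≠ 0 := by
      apply mul_ne_zero (mul_ne_zero ha hb); nlinarith
    refine upper_contra hdisc m hm (h 0) (h i * h 0 * (h i)⁻¹ * (h 0)⁻¹) hgS
      (S.mul_mem (S.mul_mem (S.mul_mem hiS hgS) (S.inv_mem hiS)) (S.inv_mem hgS)) h0 s hs ?_
    rw [Matrix.SpecialLinearGroup.coe_mul, Matrix.SpecialLinearGroup.coe_mul,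
      Matrix.SpecialLinearGroup.coe_mul, ← hAdef, hA, h0, hAinv, hHinv,
      Matrix.mul_fin_two, Matrix.mul_fin_two, Matrix.mul_fin_two]
    ext r t; fin_cases r <;> fin_cases t <;> simp [hsdef] <;> ring_nf <;>
      first
        | rfl
        | linear_combination (A 0 0 * A 0 1) * hmw
        | linear_combination (m * m⁻¹) * had + hmw
        | nlinarith [had, hmw]

private lemma trace_mul_expand (A B : SL(2,ℝ)) :
    Matrix.trace ((A * B : SL(2,ℝ)) : Matrix (Fin 2) (Fin 2) ℝ) =
      (A : Matrix (Fin 2) (Fin 2) ℝ) 0 0 * (B : Matrix (Fin 2) (Fin 2) ℝ) 0 0 +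
      (A : Matrix (Fin 2) (Fin 2) ℝ) 0 1 * (B : Matrix (Fin 2) (Fin 2) ℝ) 1 0 +
      (A : Matrix (Fin 2) (Fin 2) ℝ) 1 0 * (B : Matrix (Fin 2) (Fin 2) ℝ) 0 1 +
      (A : Matrix (Fin 2) (Fin 2) ℝ) 1 1 * (B : Matrix (Fin 2) (Fin 2) ℝ) 1 1 := by
  rw [Matrix.SpecialLinearGroup.coe_mul, Matrix.trace_fin_two]
  simp only [Matrix.mul_apply, Fin.sum_univ_two]
  ring

private lemma entry_mul (B C : SL(2,ℝ)) (r t : Fin 2) :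
    ((B * C : SL(2,ℝ)) : Matrix (Fin 2) (Fin 2) ℝ) r t =
      (B : Matrix (Fin 2) (Fin 2) ℝ) r 0 * (C : Matrix (Fin 2) (Fin 2) ℝ) 0 t +
      (B : Matrix (Fin 2) (Fin 2) ℝ) r 1 * (C : Matrix (Fin 2) (Fin 2) ℝ) 1 t := by
  rw [Matrix.SpecialLinearGroup.coe_mul, Matrix.mul_apply, Fin.sum_univ_two]

theorem stmt_11 (m : ℝ) (hm : 1 < m) (n : ℕ)
    (h h' : Fin (n + 1) → SL(2, ℝ))
    (h0 : (h 0 : Matrix (Fin 2) (Fin 2) ℝ) = !![m, 0; 0, m⁻¹])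
    (h0' : h 0 = h' 0)
    (hdisc : DiscreteTopology (Subgroup.closure (Set.range h) : Subgroup (SL(2, ℝ))))
    (hdisc' : DiscreteTopology (Subgroup.closure (Set.range h') : Subgroup (SL(2, ℝ))))
    (hnd : ∀ i : Fin (n + 1), i ≠ 0 → ¬ (h i : Matrix (Fin 2) (Fin 2) ℝ).IsDiag)
    (hnd' : ∀ i : Fin (n + 1), i ≠ 0 → ¬ (h' i : Matrix (Fin 2) (Fin 2) ℝ).IsDiag)
    (htr1 : ∀ i, Matrix.trace (h i : Matrix (Fin 2) (Fin 2) ℝ) =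
      Matrix.trace (h' i : Matrix (Fin 2) (Fin 2) ℝ))
    (htr2 : ∀ i j : Fin (n + 1), i < j →
      Matrix.trace ((h i * h j : SL(2, ℝ)) : Matrix (Fin 2) (Fin 2) ℝ) =
        Matrix.trace ((h' i * h' j : SL(2, ℝ)) : Matrix (Fin 2) (Fin 2) ℝ))
    (htr3 : ∀ i j k : Fin (n + 1), i < j → j < k →
      Matrix.trace ((h i * h j * h k : SL(2, ℝ)) : Matrix (Fin 2) (Fin 2) ℝ) =
        Matrix.trace ((h' i * h' j * h' k : SL(2, ℝ)) : Matrix (Fin 2) (Fin 2) ℝ)) :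
    ∃ u v : ℝ, u ≠ 0 ∧ v ≠ 0 ∧ ∀ i,
      (h' i : Matrix (Fin 2) (Fin 2) ℝ) =
        Matrix.diagonal ![u, v] * (h i : Matrix (Fin 2) (Fin 2) ℝ) *
          (Matrix.diagonal ![u, v])⁻¹ := by
  have hm0 : (0:ℝ) < m := lt_trans one_pos hm
  have hmw : m * m⁻¹ = 1 := mul_inv_cancel₀ hm0.ne'
  have hwm : m - m⁻¹ ≠ 0 := by
    intro e; rw [sub_eq_zero] at e; nlinarith
  have h0'' : ((h' 0 : SL(2,ℝ)) : Matrix (Fin 2) (Fin 2) ℝ) = !![m, 0; 0, m⁻¹] := by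
    rw [← h0']; exact h0
  -- Step A : diagonal entries agree
  have hAD : ∀ i : Fin (n+1),
      (h' i : Matrix (Fin 2) (Fin 2) ℝ) 0 0 = (h i : Matrix (Fin 2) (Fin 2) ℝ) 0 0 ∧
      (h' i : Matrix (Fin 2) (Fin 2) ℝ) 1 1 = (h i : Matrix (Fin 2) (Fin 2) ℝ) 1 1 := by
    intro i
    by_cases hi : i = 0
    · subst hi; rw [← h0']; exact ⟨rfl, rfl⟩
    · have hpos : (0 : Fin (n+1)) < i := Fin.pos_of_ne_zero hi
      have E1 := htr1 i
      rw [Matrix.trace_fin_two, Matrix.trace_fin_two] at E1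
      have E2 := htr2 0 i hpos
      rw [trace_mul_expand, trace_mul_expand, h0, h0''] at E2
      simp at E2
      constructor
      · have hz : (m - m⁻¹) *
            ((h' i : Matrix (Fin 2) (Fin 2) ℝ) 0 0 - (h i : Matrix (Fin 2) (Fin 2) ℝ) 0 0)
            = 0 := by linear_combination m⁻¹ * E1 - E2
        exact sub_eq_zero.mp ((mul_eq_zero.mp hz).resolve_left hwm)
      · have hz : (m - m⁻¹) *
            ((h' i : Matrix (Fin 2) (Fin 2) ℝ) 1 1 - (h i : Matrix (Fin 2) (Fin 2) ℝ) 1 1)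
            = 0 := by linear_combination E2 - m * E1
        exact sub_eq_zero.mp ((mul_eq_zero.mp hz).resolve_left hwm)
  -- nonzero off-diagonal entries
  have hB := fun (i : Fin (n+1)) (hi : i ≠ 0) => offdiag_ne m hm h h0 hdisc i (hnd i hi)
  have hB' := fun (i : Fin (n+1)) (hi : i ≠ 0) => offdiag_ne m hm h' h0'' hdisc' i (hnd' i hi)
  -- products of off-diagonal entries agree (from det)
  have hbc : ∀ i : Fin (n+1),
      (h i : Matrix (Fin 2) (Fin 2) ℝ) 0 1 * (h i : Matrix (Fin 2) (Fin 2) ℝ) 1 0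
        = (h' i : Matrix (Fin 2) (Fin 2) ℝ) 0 1 * (h' i : Matrix (Fin 2) (Fin 2) ℝ) 1 0 := by
    intro i
    have d1 : (h i : Matrix (Fin 2) (Fin 2) ℝ) 0 0 * (h i : Matrix (Fin 2) (Fin 2) ℝ) 1 1
        - (h i : Matrix (Fin 2) (Fin 2) ℝ) 0 1 * (h i : Matrix (Fin 2) (Fin 2) ℝ) 1 0 = 1 := by
      rw [← Matrix.det_fin_two]; exact (h i).prop
    have d2 : (h' i : Matrix (Fin 2) (Fin 2) ℝ) 0 0 * (h' i : Matrix (Fin 2) (Fin 2) ℝ) 1 1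
        - (h' i : Matrix (Fin 2) (Fin 2) ℝ) 0 1 * (h' i : Matrix (Fin 2) (Fin 2) ℝ) 1 0 = 1 := by
      rw [← Matrix.det_fin_two]; exact (h' i).prop
    obtain ⟨ha, hd⟩ := hAD i
    rw [ha, hd] at d2
    linear_combination d2 - d1
  -- cross products of off-diagonal entries agree
  have hR : ∀ i j : Fin (n+1), i ≠ 0 → i < j →
      (h i : Matrix (Fin 2) (Fin 2) ℝ) 0 1 * (h j : Matrix (Fin 2) (Fin 2) ℝ) 1 0
        = (h' i : Matrix (Fin 2) (Fin 2) ℝ) 0 1 * (h' j : Matrix (Fin 2) (Fin 2) ℝ) 1 0 ∧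
      (h i : Matrix (Fin 2) (Fin 2) ℝ) 1 0 * (h j : Matrix (Fin 2) (Fin 2) ℝ) 0 1
        = (h' i : Matrix (Fin 2) (Fin 2) ℝ) 1 0 * (h' j : Matrix (Fin 2) (Fin 2) ℝ) 0 1 := by
    intro i j hi hij
    have hpos : (0 : Fin (n+1)) < i := Fin.pos_of_ne_zero hi
    have E1 := htr2 i j hij
    rw [trace_mul_expand, trace_mul_expand] at E1
    have E2 := htr3 0 i j hpos hij
    rw [mul_assoc, mul_assoc, trace_mul_expand, trace_mul_expand, h0, h0''] at E2
    simp only [entry_mul] at E2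
    simp at E2
    obtain ⟨hai, hdi⟩ := hAD i
    obtain ⟨haj, hdj⟩ := hAD j
    rw [hai, hdi, haj, hdj] at E1 E2
    constructor
    · have hz : (m - m⁻¹) *
          ((h i : Matrix (Fin 2) (Fin 2) ℝ) 0 1 * (h j : Matrix (Fin 2) (Fin 2) ℝ) 1 0
            - (h' i : Matrix (Fin 2) (Fin 2) ℝ) 0 1 * (h' j : Matrix (Fin 2) (Fin 2) ℝ) 1 0)
          = 0 := by linear_combination E2 - m⁻¹ * E1
      exact sub_eq_zero.mp ((mul_eq_zero.mp hz).resolve_left hwm)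
    · have hz : (m - m⁻¹) *
          ((h i : Matrix (Fin 2) (Fin 2) ℝ) 1 0 * (h j : Matrix (Fin 2) (Fin 2) ℝ) 0 1
            - (h' i : Matrix (Fin 2) (Fin 2) ℝ) 1 0 * (h' j : Matrix (Fin 2) (Fin 2) ℝ) 0 1)
          = 0 := by linear_combination m * E1 - E2
      exact sub_eq_zero.mp ((mul_eq_zero.mp hz).resolve_left hwm)
  by_cases hn : n = 0
  · subst hn
    refine ⟨1, 1, one_ne_zero, one_ne_zero, ?_⟩
    intro i
    have hi0 : i = 0 := Fin.ext (by omega)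
    subst hi0
    have hD1 : (Matrix.diagonal ![(1:ℝ), 1]) = 1 := by
      ext r t; fin_cases r <;> fin_cases t <;> simp [Matrix.diagonal]
    rw [hD1, ← h0']
    simp
  · set ι : Fin (n+1) := ⟨1, by omega⟩ with hιdef
    have hι0 : ι ≠ 0 := by simp [hιdef, Fin.ext_iff]
    obtain ⟨hb1, hc1⟩ := hB ι hι0
    obtain ⟨hb1', hc1'⟩ := hB' ι hι0
    set u : ℝ := (h' ι : Matrix (Fin 2) (Fin 2) ℝ) 0 1 / (h ι : Matrix (Fin 2) (Fin 2) ℝ) 0 1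
      with hu
    have hu0 : u ≠ 0 := div_ne_zero hb1' hb1
    have hbu : (h' ι : Matrix (Fin 2) (Fin 2) ℝ) 0 1
        = u * (h ι : Matrix (Fin 2) (Fin 2) ℝ) 0 1 := by
      rw [hu]; field_simp
    have hcu : (h' ι : Matrix (Fin 2) (Fin 2) ℝ) 1 0
        = u⁻¹ * (h ι : Matrix (Fin 2) (Fin 2) ℝ) 1 0 := by
      have hq := hbc ι
      rw [hbu] at hq
      have h3 : (h ι : Matrix (Fin 2) (Fin 2) ℝ) 1 0
          = u * (h' ι : Matrix (Fin 2) (Fin 2) ℝ) 1 0 := by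
        apply mul_left_cancel₀ hb1
        linear_combination hq
      rw [h3]
      field_simp
    have key : ∀ i : Fin (n+1), i ≠ 0 →
        (h' i : Matrix (Fin 2) (Fin 2) ℝ) 0 1 = u * (h i : Matrix (Fin 2) (Fin 2) ℝ) 0 1 ∧
        (h' i : Matrix (Fin 2) (Fin 2) ℝ) 1 0 = u⁻¹ * (h i : Matrix (Fin 2) (Fin 2) ℝ) 1 0 := by
      intro i hi
      by_cases hone : i = ι
      · subst hone; exact ⟨hbu, hcu⟩
      · have hlt : ι < i := by
          rw [Fin.lt_def]
          have h4 : (i : ℕ) ≠ 0 := by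
            intro e; apply hi; exact Fin.ext e
          have h5 : (i : ℕ) ≠ 1 := by
            intro e; apply hone; exact Fin.ext e
          simp [hιdef]; omega
        obtain ⟨R1, R2⟩ := hR ι i hι0 hlt
        rw [hbu] at R1
        rw [hcu] at R2
        have huu : u * u⁻¹ = 1 := mul_inv_cancel₀ hu0
        have huu2 : u⁻¹ * u = 1 := inv_mul_cancel₀ hu0
        constructor
        · -- from R2 : c_ι b_i = (u⁻¹ c_ι) b'_i
          apply mul_left_cancel₀ hc1
          linear_combination (-u) * R2 -
            ((h ι : Matrix (Fin 2) (Fin 2) ℝ) 1 0 *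
              (h' i : Matrix (Fin 2) (Fin 2) ℝ) 0 1) * huu
        · -- from R1 : b_ι c_i = (u b_ι) c'_i
          apply mul_left_cancel₀ hb1
          linear_combination (-u⁻¹) * R1 -
            ((h ι : Matrix (Fin 2) (Fin 2) ℝ) 0 1 *
              (h' i : Matrix (Fin 2) (Fin 2) ℝ) 1 0) * huu2
    refine ⟨u, 1, hu0, one_ne_zero, ?_⟩
    intro i
    have hDinv : (Matrix.diagonal ![u, (1:ℝ)])⁻¹ = Matrix.diagonal ![u⁻¹, 1] := by
      apply Matrix.inv_eq_right_inv
      ext r t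
      fin_cases r <;> fin_cases t <;>
        simp [Matrix.mul_apply, Matrix.diagonal, Fin.sum_univ_two, mul_inv_cancel₀ hu0]
    have hD : Matrix.diagonal ![u, (1:ℝ)] = !![u, 0; 0, 1] := by
      ext r t; fin_cases r <;> fin_cases t <;> simp [Matrix.diagonal]
    have hDi : Matrix.diagonal ![u⁻¹, (1:ℝ)] = !![u⁻¹, 0; 0, 1] := by
      ext r t; fin_cases r <;> fin_cases t <;> simp [Matrix.diagonal]
    rw [hDinv, hD, hDi]
    by_cases hi : i = 0
    · subst hi
      rw [← h0', h0, Matrix.mul_fin_two, Matrix.mul_fin_two]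
      ext r t
      fin_cases r <;> fin_cases t <;>
        simp <;>
        first
          | (field_simp; try ring)
          | ring
    · obtain ⟨ha, hd⟩ := hAD i
      obtain ⟨hb, hc⟩ := key i hi
      rw [Matrix.eta_fin_two ((h' i : SL(2,ℝ)) : Matrix (Fin 2) (Fin 2) ℝ), ha, hd, hb, hc,
        Matrix.eta_fin_two ((h i : SL(2,ℝ)) : Matrix (Fin 2) (Fin 2) ℝ),
        Matrix.mul_fin_two, Matrix.mul_fin_two]
      ext r t
      fin_cases r <;> fin_cases t <;>
        simp <;>
        first
          | (field_simp; try ring)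
          | ring
end
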